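/- arXiv:1907.11033 — 3 statements merged into one kernel-verified Lean document; each statement's English description precedes it below -/
import Mathlib

section
/- Theorem 1 (conditional independence and the support of θ): let V be a finite set, let p : ({0,1}^V) → ℝ be a positive probability mass function (p(x) > 0 for all x and ∑_x p(x) = 1), and let θ_D = ∑_{D' ⊆ D} (−1)^{|D ∖ D'|} log p(𝟙_{D'}) for D ⊆ V, where 𝟙_{D'} ∈ {0,1}^V is the indicator of D'. Then for every pair of disjoint nonempty subsets A, B of V the following are equivalent: (i) X_A is conditionally independent of X_B given X_{V ∖ (A ∪ B)}, i.e. for all x, y ∈ {0,1}^V that agree on V ∖ (A ∪ B), p(x)·p(y) = p(x')·p(y'), where x' agrees with x on V ∖ B and with y on B, and y' agrees with y on V ∖ B and with x on B; (ii) θ_D = 0 for every D ⊆ V such that A ∩ D ≠ ∅ and B ∩ D ≠ ∅. -/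
open Finset

private lemma mbv_neg_one_pow_sub {n k : ℕ} (hk : k ≤ n) :
    (-1 : ℝ) ^ (n - k) = (-1) ^ n * (-1) ^ k := by
  have h : n - k + k = n := Nat.sub_add_cancel hk
  have h2 : (-1 : ℝ) ^ n * (-1) ^ k = (-1) ^ (n - k) * ((-1) ^ k * (-1) ^ k) := by
    conv_lhs => rw [← h]
    rw [pow_add, mul_assoc]
  have h3 : ((-1 : ℝ) ^ k * (-1) ^ k) = 1 := by
    rw [← mul_pow]; norm_num
  rw [h2, h3, mul_one]

private lemma mbv_inner_sum {V : Type*} [DecidableEq V] (S D' : Finset V) (h : D' ⊆ S) :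
    ∑ D ∈ S.powerset.filter (fun D => D' ⊆ D), (-1 : ℝ) ^ ((D \ D').card)
      = if D' = S then 1 else 0 := by
  have key : ∑ D ∈ S.powerset.filter (fun D => D' ⊆ D), (-1 : ℝ) ^ ((D \ D').card)
      = ∑ E ∈ (S \ D').powerset, (-1 : ℝ) ^ E.card := by
    refine Finset.sum_nbij' (fun D => D \ D') (fun E => D' ∪ E) ?_ ?_ ?_ ?_ ?_
    · intro D hD
      rw [Finset.mem_filter, Finset.mem_powerset] at hD
      exact Finset.mem_powerset.mpr (Finset.sdiff_subset_sdiff hD.1 (le_refl _))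
    · intro E hE
      rw [Finset.mem_powerset] at hE
      rw [Finset.mem_filter, Finset.mem_powerset]
      exact ⟨Finset.union_subset h (hE.trans Finset.sdiff_subset), Finset.subset_union_left⟩
    · intro D hD
      rw [Finset.mem_filter] at hD
      exact Finset.union_sdiff_of_subset hD.2
    · intro E hE
      rw [Finset.mem_powerset] at hE
      have hdisj : Disjoint D' E :=
        Finset.disjoint_left.mpr fun i hi hiE => (Finset.mem_sdiff.mp (hE hiE)).2 hi
      exact Finset.union_sdiff_cancel_left hdisj
    · intro D _; rfl
  rw [key]
  have hcast : ∑ E ∈ (S \ D').powerset, (-1 : ℝ) ^ E.card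
      = ((∑ E ∈ (S \ D').powerset, (-1 : ℤ) ^ E.card : ℤ) : ℝ) := by push_cast; rfl
  rw [hcast, Finset.sum_powerset_neg_one_pow_card]
  by_cases hSD : D' = S
  · have : S \ D' = ∅ := by rw [hSD]; simp
    simp [this, hSD]
  · have : S \ D' ≠ ∅ := by
      rw [Ne, Finset.sdiff_eq_empty_iff_subset]
      intro hs; exact hSD (Finset.Subset.antisymm h hs)
    simp [this, hSD]

private lemma mbv_inversion {V : Type*} [DecidableEq V] (f : Finset V → ℝ) (S : Finset V) :
    ∑ D ∈ S.powerset, ∑ D' ∈ D.powerset, (-1 : ℝ) ^ ((D \ D').card) * f D' = f S := by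
  rw [Finset.sum_comm' (s' := fun D' => S.powerset.filter (fun D => D' ⊆ D))
    (t' := S.powerset) (by
      intro D D'
      simp only [Finset.mem_powerset, Finset.mem_filter]
      constructor
      · rintro ⟨h1, h2⟩; exact ⟨⟨h1, h2⟩, h2.trans h1⟩
      · rintro ⟨⟨h1, h2⟩, _⟩; exact ⟨h1, h2⟩)]
  have hcong : ∀ D' ∈ S.powerset,
      ∑ D ∈ S.powerset.filter (fun D => D' ⊆ D), (-1 : ℝ) ^ ((D \ D').card) * f D'
        = (if D' = S then 1 else 0) * f D' := by
    intro D' hD'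
    rw [← Finset.sum_mul, mbv_inner_sum S D' (Finset.mem_powerset.mp hD')]
  rw [Finset.sum_congr rfl hcong]
  rw [Finset.sum_eq_single_of_mem S (Finset.mem_powerset_self S)]
  · simp
  · intro b _ hb; simp [hb]

/-- Theorem 1: for a positive pmf `p` on `{0,1}^V` with canonical parameters `θ`,
and disjoint nonempty `A B ⊆ V`, conditional independence of `X_A` and `X_B` given
the rest is equivalent to `θ_D = 0` for every `D` meeting both `A` and `B`. -/
theorem mbv_conditional_independence_iff_theta_support
    {V : Type*} [Fintype V] [DecidableEq V]
    (p : (V → Bool) → ℝ) (hp : ∀ x, 0 < p x) (hsum : ∑ x : V → Bool, p x = 1)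
    (θ : Finset V → ℝ)
    (hθ : ∀ D : Finset V, θ D = ∑ D' ∈ D.powerset,
      (-1 : ℝ) ^ ((D \ D').card) * Real.log (p (fun i => decide (i ∈ D'))))
    (A B : Finset V) (hA : A.Nonempty) (hB : B.Nonempty) (hAB : Disjoint A B) :
    (∀ x y : V → Bool, (∀ i, i ∉ A ∪ B → x i = y i) →
        p x * p y =
          p (fun i => if i ∈ B then y i else x i) *
            p (fun i => if i ∈ B then x i else y i)) ↔
      (∀ D : Finset V, (A ∩ D).Nonempty → (B ∩ D).Nonempty → θ D = 0) := by
  classical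
  constructor
  · -- (i) → (ii)
    intro hCI D hAD hBD
    obtain ⟨a, ha⟩ := hAD
    obtain ⟨b, hb⟩ := hBD
    rw [Finset.mem_inter] at ha hb
    obtain ⟨haA, haD⟩ := ha
    obtain ⟨hbB, hbD⟩ := hb
    have haB : a ∉ B := Finset.disjoint_left.mp hAB haA
    have hbA : b ∉ A := fun h => (Finset.disjoint_left.mp hAB h) hbB
    have hab : a ≠ b := fun h => haB (h ▸ hbB)
    set D₀ := (D.erase a).erase b with hD₀
    have hbea : b ∈ D.erase a := Finset.mem_erase.mpr ⟨fun h => hab h.symm, hbD⟩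
    have h1 : insert b D₀ = D.erase a := Finset.insert_erase hbea
    have h2 : insert a (insert b D₀) = D := by rw [h1]; exact Finset.insert_erase haD
    have hbn : b ∉ D₀ := Finset.notMem_erase _ _
    have han : a ∉ insert b D₀ := by rw [h1]; exact Finset.notMem_erase _ _
    -- conditional independence per-term log identity
    have hterm : ∀ E : Finset V, E ⊆ D₀ →
        Real.log (p (fun i => decide (i ∈ E)))
          + Real.log (p (fun i => decide (i ∈ insert a (insert b E))))
        = Real.log (p (fun i => decide (i ∈ insert a E)))
          + Real.log (p (fun i => decide (i ∈ insert b E))) := by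
      intro E _
      have hagree : ∀ i, i ∉ A ∪ B →
          (fun i => decide (i ∈ insert a (insert b E))) i = (fun i => decide (i ∈ E)) i := by
        intro i hi
        have hia : i ≠ a := fun h => hi (Finset.mem_union_left _ (h ▸ haA))
        have hib : i ≠ b := fun h => hi (Finset.mem_union_right _ (h ▸ hbB))
        simp [Finset.mem_insert, hia, hib]
      have hmul := hCI _ _ hagree
      have hx' : (fun i => if i ∈ B then (fun i => decide (i ∈ E)) i
            else (fun i => decide (i ∈ insert a (insert b E))) i)
          = fun i => decide (i ∈ insert a E) := by
        funext i
        by_cases hiB : i ∈ B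
        · have hia : i ≠ a := fun h => haB (h ▸ hiB)
          simp [hiB, Finset.mem_insert, hia]
        · have hib : i ≠ b := fun h => hiB (h ▸ hbB)
          simp [hiB, Finset.mem_insert, hib]
      have hy' : (fun i => if i ∈ B then (fun i => decide (i ∈ insert a (insert b E))) i
            else (fun i => decide (i ∈ E)) i)
          = fun i => decide (i ∈ insert b E) := by
        funext i
        by_cases hiB : i ∈ B
        · have hia : i ≠ a := fun h => haB (h ▸ hiB)
          simp [hiB, Finset.mem_insert, hia]
        · have hib : i ≠ b := fun h => hiB (h ▸ hbB)
          simp [hiB, Finset.mem_insert, hib]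
      rw [hx', hy'] at hmul
      have hlog := congrArg Real.log hmul
      rw [Real.log_mul (hp _).ne' (hp _).ne', Real.log_mul (hp _).ne' (hp _).ne'] at hlog
      linarith
    rw [hθ D, ← h2]
    rw [Finset.sum_powerset_insert han, Finset.sum_powerset_insert hbn,
      Finset.sum_powerset_insert hbn, ← Finset.sum_add_distrib, ← Finset.sum_add_distrib,
      ← Finset.sum_add_distrib]
    apply Finset.sum_eq_zero
    intro E hE
    rw [Finset.mem_powerset] at hE
    set T := insert a (insert b D₀) with hT
    have hbE : b ∉ E := fun h => hbn (hE h)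
    have haE : a ∉ E := fun h => han (Finset.mem_insert_of_mem (hE h))
    have habE : a ∉ insert b E := by
      intro h
      rcases Finset.mem_insert.mp h with h | h
      · exact hab h
      · exact haE h
    have hsubT : insert a (insert b E) ⊆ T := by
      apply Finset.insert_subset_insert
      exact Finset.insert_subset_insert _ hE
    have hET : E ⊆ T := fun i hi => hsubT (Finset.mem_insert_of_mem (Finset.mem_insert_of_mem hi))
    have hbET : insert b E ⊆ T := fun i hi => hsubT (by
      rcases Finset.mem_insert.mp hi with h | h
      · exact Finset.mem_insert_of_mem (h ▸ Finset.mem_insert_self _ _)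
      · exact Finset.mem_insert_of_mem (Finset.mem_insert_of_mem h))
    have haET : insert a E ⊆ T := by
      apply Finset.insert_subset_insert
      exact fun i hi => Finset.mem_insert_of_mem (hE hi)
    have cE : (insert a E).card = E.card + 1 := Finset.card_insert_of_notMem haE
    have cbE : (insert b E).card = E.card + 1 := Finset.card_insert_of_notMem hbE
    have cabE : (insert a (insert b E)).card = E.card + 2 := by
      rw [Finset.card_insert_of_notMem habE, cbE]
    have s0 : (-1 : ℝ) ^ ((T \ E).card) = (-1) ^ T.card * (-1) ^ E.card := by
      rw [Finset.card_sdiff_of_subset hET]; exact mbv_neg_one_pow_sub (Finset.card_le_card hET)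
    have s1 : (-1 : ℝ) ^ ((T \ insert b E).card) = (-1) ^ T.card * (-1) ^ (E.card + 1) := by
      rw [Finset.card_sdiff_of_subset hbET, cbE]
      rw [← cbE]
      rw [cbE]
      exact mbv_neg_one_pow_sub (by rw [← cbE]; exact Finset.card_le_card hbET)
    have s2 : (-1 : ℝ) ^ ((T \ insert a E).card) = (-1) ^ T.card * (-1) ^ (E.card + 1) := by
      rw [Finset.card_sdiff_of_subset haET, cE]
      exact mbv_neg_one_pow_sub (by rw [← cE]; exact Finset.card_le_card haET)
    have s3 : (-1 : ℝ) ^ ((T \ insert a (insert b E)).card)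
        = (-1) ^ T.card * (-1) ^ (E.card + 2) := by
      rw [Finset.card_sdiff_of_subset hsubT, cabE]
      exact mbv_neg_one_pow_sub (by rw [← cabE]; exact Finset.card_le_card hsubT)
    rw [s0, s1, s2, s3]
    linear_combination ((-1 : ℝ) ^ T.card * (-1) ^ E.card) * hterm E hE
  · -- (ii) → (i)
    intro hz x y hxy
    have hrep : ∀ z : V → Bool, Real.log (p z)
        = ∑ D ∈ (Finset.univ : Finset V).powerset,
            (if D ⊆ Finset.univ.filter (fun i => z i = true) then θ D else 0) := by
      intro z
      set Sz := Finset.univ.filter (fun i => z i = true) with hSz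
      have hzind : (fun i => decide (i ∈ Sz)) = z := by
        funext i; simp [hSz]
      calc Real.log (p z) = Real.log (p (fun i => decide (i ∈ Sz))) := by rw [hzind]
        _ = ∑ D ∈ Sz.powerset, ∑ D' ∈ D.powerset,
              (-1 : ℝ) ^ ((D \ D').card) * Real.log (p (fun i => decide (i ∈ D'))) :=
            (mbv_inversion (fun S => Real.log (p (fun i => decide (i ∈ S)))) Sz).symm
        _ = ∑ D ∈ Sz.powerset, θ D := by
            refine Finset.sum_congr rfl fun D _ => (hθ D).symm
        _ = ∑ D ∈ Finset.univ.powerset.filter (fun D => D ⊆ Sz), θ D := by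
            congr 1
            ext D
            simp [Finset.mem_powerset, Finset.mem_filter]
        _ = ∑ D ∈ (Finset.univ : Finset V).powerset, (if D ⊆ Sz then θ D else 0) :=
            Finset.sum_filter _ _
    have hlog : Real.log (p x) + Real.log (p y)
        = Real.log (p (fun i => if i ∈ B then y i else x i))
          + Real.log (p (fun i => if i ∈ B then x i else y i)) := by
      rw [hrep x, hrep y, hrep (fun i => if i ∈ B then y i else x i),
        hrep (fun i => if i ∈ B then x i else y i), ← Finset.sum_add_distrib,
        ← Finset.sum_add_distrib]
      refine Finset.sum_congr rfl fun D _ => ?_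
      have hsubiff : ∀ z : V → Bool,
          D ⊆ Finset.univ.filter (fun i => z i = true) ↔ ∀ i ∈ D, z i = true := by
        intro z; simp [Finset.subset_iff]
      by_cases hAD : (A ∩ D).Nonempty
      · by_cases hBD : (B ∩ D).Nonempty
        · simp [hz D hAD hBD]
        · -- D misses B : swap does nothing on D
          have hDB : ∀ i ∈ D, i ∉ B := by
            intro i hi hib
            exact hBD ⟨i, Finset.mem_inter.mpr ⟨hib, hi⟩⟩
          have e1 : (D ⊆ Finset.univ.filter (fun i => (if i ∈ B then y i else x i) = true))
              ↔ (D ⊆ Finset.univ.filter (fun i => x i = true)) := by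
            rw [hsubiff, hsubiff]
            refine forall₂_congr fun i hi => ?_
            rw [if_neg (hDB i hi)]
          have e2 : (D ⊆ Finset.univ.filter (fun i => (if i ∈ B then x i else y i) = true))
              ↔ (D ⊆ Finset.univ.filter (fun i => y i = true)) := by
            rw [hsubiff, hsubiff]
            refine forall₂_congr fun i hi => ?_
            rw [if_neg (hDB i hi)]
          simp only [e1, e2]
      · -- D misses A : swap exchanges x and y on D
        have hDA : ∀ i ∈ D, i ∉ A := by
          intro i hi hia
          exact hAD ⟨i, Finset.mem_inter.mpr ⟨hia, hi⟩⟩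
        have e1 : (D ⊆ Finset.univ.filter (fun i => (if i ∈ B then y i else x i) = true))
            ↔ (D ⊆ Finset.univ.filter (fun i => y i = true)) := by
          rw [hsubiff, hsubiff]
          refine forall₂_congr fun i hi => ?_
          by_cases hiB : i ∈ B
          · rw [if_pos hiB]
          · rw [if_neg hiB, hxy i (by
              intro hu
              rcases Finset.mem_union.mp hu with h | h
              · exact hDA i hi h
              · exact hiB h)]
        have e2 : (D ⊆ Finset.univ.filter (fun i => (if i ∈ B then x i else y i) = true))
            ↔ (D ⊆ Finset.univ.filter (fun i => x i = true)) := by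
          rw [hsubiff, hsubiff]
          refine forall₂_congr fun i hi => ?_
          by_cases hiB : i ∈ B
          · rw [if_pos hiB]
          · rw [if_neg hiB, ← hxy i (by
              intro hu
              rcases Finset.mem_union.mp hu with h | h
              · exact hDA i hi h
              · exact hiB h)]
        simp only [e1, e2]
        exact add_comm _ _
    have hmulpos := mul_pos (hp x) (hp y)
    have hmulpos' := mul_pos (hp (fun i => if i ∈ B then y i else x i))
      (hp (fun i => if i ∈ B then x i else y i))
    have hlogmul : Real.log (p x * p y)
        = Real.log (p (fun i => if i ∈ B then y i else x i)
            * p (fun i => if i ∈ B then x i else y i)) := by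
      rw [Real.log_mul (hp x).ne' (hp y).ne', Real.log_mul (hp _).ne' (hp _).ne']
      exact hlog
    calc p x * p y = Real.exp (Real.log (p x * p y)) := (Real.exp_log hmulpos).symm
      _ = Real.exp (Real.log (p (fun i => if i ∈ B then y i else x i)
            * p (fun i => if i ∈ B then x i else y i))) := by rw [hlogmul]
      _ = _ := Real.exp_log hmulpos'
end

section
/- Pairwise corollary of Theorem 1: let V be a finite set with |V| ≥ 2, let p : ({0,1}^V) → ℝ be a positive probability mass function, and let θ_D = ∑_{D' ⊆ D} (−1)^{|D ∖ D'|} log p(𝟙_{D'}). Then for distinct i, j ∈ V, the variables X_i and X_j are conditionally independent given X_{V ∖ {i,j}} if and only if θ_D = 0 for every D ⊆ V with {i, j} ⊆ D. -/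
open Finset

section Aux

variable {V : Type*} [DecidableEq V]

private def indF (S : Finset V) : V → Bool := fun k => decide (k ∈ S)

private lemma card_sdiff_insert' {a : V} {s t : Finset V} (has : a ∈ s) (hat : a ∉ t) :
    (s \ t).card = (s \ insert a t).card + 1 := by
  have h : s \ t = insert a (s \ insert a t) := by
    ext x
    simp only [mem_sdiff, mem_insert, not_or]
    constructor
    · rintro ⟨hxs, hxt⟩
      by_cases hx : x = a
      · exact Or.inl hx
      · exact Or.inr ⟨hxs, hx, hxt⟩
    · rintro (rfl | ⟨hxs, _, hxt⟩)
      · exact ⟨has, hat⟩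
      · exact ⟨hxs, hxt⟩
  rw [h, card_insert_of_notMem (by simp)]

/-- Möbius inversion over the subset lattice. -/
private lemma mobius_inv (f : Finset V → ℝ) (S : Finset V) :
    ∑ D ∈ S.powerset, ∑ D' ∈ D.powerset, (-1 : ℝ) ^ ((D \ D').card) * f D' = f S := by
  induction S using Finset.induction_on generalizing f with
  | empty => simp
  | @insert a S haS ih =>
    rw [Finset.sum_powerset_insert haS]
    have key : ∀ D ∈ S.powerset,
        (∑ D' ∈ (insert a D).powerset, (-1 : ℝ) ^ (((insert a D) \ D').card) * f D')
          = -(∑ D' ∈ D.powerset, (-1 : ℝ) ^ ((D \ D').card) * f D')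
            + ∑ D' ∈ D.powerset, (-1 : ℝ) ^ ((D \ D').card) * f (insert a D') := by
      intro D hD
      rw [mem_powerset] at hD
      have haD : a ∉ D := fun h => haS (hD h)
      rw [Finset.sum_powerset_insert haD]
      congr 1
      · rw [← Finset.sum_neg_distrib]
        refine Finset.sum_congr rfl fun D' hD' => ?_
        rw [mem_powerset] at hD'
        have haD' : a ∉ D' := fun h => haD (hD' h)
        rw [insert_sdiff_of_notMem _ haD',
          card_insert_of_notMem (by simp [haD]), pow_succ]
        ring
      · refine Finset.sum_congr rfl fun D' hD' => ?_
        rw [mem_powerset] at hD'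
        have haD' : a ∉ D' := fun h => haD (hD' h)
        have hs : insert a D \ insert a D' = D \ D' := by
          ext x
          simp only [mem_sdiff, mem_insert, not_or]
          constructor
          · rintro ⟨hx | hx, hxa, hxD'⟩
            · exact absurd hx hxa
            · exact ⟨hx, hxD'⟩
          · rintro ⟨hxD, hxD'⟩
            exact ⟨Or.inr hxD, fun h => haD (h ▸ hxD), hxD'⟩
        rw [hs]
    have h3 : (∑ x ∈ S.powerset, ∑ D' ∈ x.powerset, (-1 : ℝ) ^ ((x \ D').card)
        * f (insert a D')) = f (insert a S) := ih fun t => f (insert a t)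
    rw [Finset.sum_congr rfl key, Finset.sum_add_distrib, Finset.sum_neg_distrib,
      ih f, h3]
    ring

private lemma mul_eq_mul_iff_log {a b c d : ℝ} (ha : 0 < a) (hb : 0 < b) (hc : 0 < c)
    (hd : 0 < d) :
    a * b = c * d ↔ Real.log a + Real.log b = Real.log c + Real.log d := by
  constructor
  · intro h
    rw [← Real.log_mul ha.ne' hb.ne', ← Real.log_mul hc.ne' hd.ne', h]
  · intro h
    have := congrArg Real.exp h
    rwa [Real.exp_add, Real.exp_add, Real.exp_log ha, Real.exp_log hb, Real.exp_log hc,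
      Real.exp_log hd] at this

variable [Fintype V]

private def toSetF (z : V → Bool) : Finset V := Finset.univ.filter (fun k => z k)

private lemma mem_toSetF {z : V → Bool} {k : V} : k ∈ toSetF z ↔ z k = true := by
  simp [toSetF]

private lemma indF_toSetF (z : V → Bool) : indF (toSetF z) = z := by
  funext k
  simp [indF, toSetF]

private lemma subset_toSetF_congr {D : Finset V} {z w : V → Bool}
    (h : ∀ k ∈ D, z k = w k) : D ⊆ toSetF z ↔ D ⊆ toSetF w := by
  simp only [Finset.subset_iff, mem_toSetF]
  constructor <;> intro H k hk
  · rw [← h k hk]; exact H hk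
  · rw [h k hk]; exact H hk

end Aux

/-- Pairwise corollary of Theorem 1: for distinct `i j ∈ V`, `X_i ⫫ X_j` given the
rest iff `θ_D = 0` for every `D` containing both `i` and `j`. -/
theorem mbv_pairwise_conditional_independence_iff
    {V : Type*} [Fintype V] [DecidableEq V] (hV : 2 ≤ Fintype.card V)
    (p : (V → Bool) → ℝ) (hp : ∀ x, 0 < p x) (hsum : ∑ x : V → Bool, p x = 1)
    (θ : Finset V → ℝ)
    (hθ : ∀ D : Finset V, θ D = ∑ D' ∈ D.powerset,
      (-1 : ℝ) ^ ((D \ D').card) * Real.log (p (fun i => decide (i ∈ D'))))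
    (i j : V) (hij : i ≠ j) :
    (∀ x y : V → Bool, (∀ k, k ≠ i → k ≠ j → x k = y k) →
        p x * p y =
          p (Function.update x j (y j)) * p (Function.update y j (x j))) ↔
      (∀ D : Finset V, i ∈ D → j ∈ D → θ D = 0) := by
  constructor
  · -- conditional independence implies vanishing of θ
    intro hCI D hiD hjD
    -- the quadruple identity in log form
    have quad : ∀ t : Finset V, i ∉ t → j ∉ t →
        Real.log (p (fun k => decide (k ∈ insert i t)))
            + Real.log (p (fun k => decide (k ∈ insert j t)))
          = Real.log (p (fun k => decide (k ∈ insert i (insert j t))))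
            + Real.log (p (fun k => decide (k ∈ t))) := by
      intro t hit hjt
      set z : V → Bool := fun k => decide (k ∈ t) with hz
      have hkey := hCI (Function.update z i true) (Function.update z j true)
        (fun k hki hkj => by rw [Function.update_of_ne hki, Function.update_of_ne hkj])
      have hc : Function.update (Function.update z i true) j
          ((Function.update z j true) j) = fun k => decide (k ∈ insert i (insert j t)) := by
        funext k
        by_cases h1 : k = j <;> by_cases h2 : k = i <;>
          simp [Function.update_apply, h1, h2, hz, Ne.symm hij]
      have hd : Function.update (Function.update z j true) j
          ((Function.update z i true) j) = z := by
        funext k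
        by_cases h1 : k = j <;>
          simp [Function.update_apply, h1, hz, Ne.symm hij, hjt]
      have ha : Function.update z i true = fun k => decide (k ∈ insert i t) := by
        funext k
        by_cases h2 : k = i <;> simp [Function.update_apply, h2, hz]
      have hb : Function.update z j true = fun k => decide (k ∈ insert j t) := by
        funext k
        by_cases h1 : k = j <;> simp [Function.update_apply, h1, hz]
      rw [hc, hd, ha, hb] at hkey
      rw [hz] at hkey
      exact (mul_eq_mul_iff_log (hp _) (hp _) (hp _) (hp _)).mp hkey
    -- decompose D
    set E : Finset V := (D.erase i).erase j with hE
    have hiE : i ∉ E := fun h => (Finset.mem_erase.mp (Finset.mem_of_mem_erase h)).1 rfl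
    have hjE : j ∉ E := fun h => (Finset.mem_erase.mp h).1 rfl
    have hiJE : i ∉ insert j E := by
      simp only [Finset.mem_insert]
      rintro (h | h)
      · exact hij h
      · exact hiE h
    have hD : D = insert i (insert j E) := by
      rw [hE, Finset.insert_erase (Finset.mem_erase.mpr ⟨Ne.symm hij, hjD⟩),
        Finset.insert_erase hiD]
    have hrw : D.powerset = (insert i (insert j E)).powerset := by rw [← hD]
    rw [hθ D, hrw, Finset.sum_powerset_insert hiJE, Finset.sum_powerset_insert hjE,
      Finset.sum_powerset_insert hjE, ← Finset.sum_add_distrib, ← Finset.sum_add_distrib,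
      ← Finset.sum_add_distrib]
    apply Finset.sum_eq_zero
    intro t ht
    rw [mem_powerset] at ht
    have hED : E ⊆ D := by
      rw [hD]
      exact (Finset.subset_insert _ _).trans (Finset.subset_insert _ _)
    have htD : t ⊆ D := ht.trans hED
    have hit : i ∉ t := fun h => hiJE (Finset.mem_insert_of_mem (ht h))
    have hjt : j ∉ t := fun h => hjE (ht h)
    have hiIt : i ∉ insert j t := by
      simp only [Finset.mem_insert]
      rintro (h | h)
      · exact hij h
      · exact hit h
    have hjIt : j ∉ insert i t := by
      simp only [Finset.mem_insert]
      rintro (h | h)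
      · exact hij (h.symm)
      · exact hjt h
    have e1 : (D \ t).card = (D \ insert i t).card + 1 := card_sdiff_insert' hiD hit
    have e2 : (D \ insert i t).card = (D \ insert i (insert j t)).card + 1 := by
      rw [Finset.insert_comm]
      exact card_sdiff_insert' hjD hjIt
    have e3 : (D \ insert j t).card = (D \ insert i (insert j t)).card + 1 :=
      card_sdiff_insert' hiD hiIt
    have hq := quad t hit hjt
    rw [e1, e2, e3]
    set c := (D \ insert i (insert j t)).card
    linear_combination (-((-1 : ℝ) ^ c)) * hq
  · -- vanishing of θ implies conditional independence
    intro hθ0 x y hxy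
    rw [mul_eq_mul_iff_log (hp _) (hp _) (hp _) (hp _)]
    have hLz : ∀ z : V → Bool, ∑ D ∈ (toSetF z).powerset, θ D = Real.log (p z) := by
      intro z
      calc ∑ D ∈ (toSetF z).powerset, θ D
          = ∑ D ∈ (toSetF z).powerset, ∑ D' ∈ D.powerset,
              (-1 : ℝ) ^ ((D \ D').card) * Real.log (p (fun k => decide (k ∈ D'))) :=
            Finset.sum_congr rfl (fun D _ => hθ D)
        _ = Real.log (p (indF (toSetF z))) := mobius_inv _ _
        _ = Real.log (p z) := by rw [indF_toSetF]
    rw [← hLz x, ← hLz y, ← hLz (Function.update x j (y j)), ← hLz (Function.update y j (x j))]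
    have hext : ∀ z : V → Bool, ∑ D ∈ (toSetF z).powerset, θ D
        = ∑ D ∈ (Finset.univ : Finset V).powerset, if D ⊆ toSetF z then θ D else 0 := by
      intro z
      rw [← Finset.sum_filter]
      congr 1
      ext D
      simp
    rw [hext x, hext y, hext (Function.update x j (y j)), hext (Function.update y j (x j)),
      ← Finset.sum_add_distrib, ← Finset.sum_add_distrib]
    refine Finset.sum_congr rfl fun D _ => ?_
    by_cases hiD : i ∈ D
    · by_cases hjD : j ∈ D
      · rw [hθ0 D hiD hjD]
        simp
      · -- j ∉ D : conditions unchanged by the updates at j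
        have h1 : D ⊆ toSetF x ↔ D ⊆ toSetF (Function.update x j (y j)) :=
          subset_toSetF_congr fun k hk =>
            (Function.update_of_ne (by rintro rfl; exact hjD hk) _ _).symm
        have h2 : D ⊆ toSetF y ↔ D ⊆ toSetF (Function.update y j (x j)) :=
          subset_toSetF_congr fun k hk =>
            (Function.update_of_ne (by rintro rfl; exact hjD hk) _ _).symm
        simp only [← h1, ← h2]
    · -- i ∉ D : the two sides swap
      have h1 : D ⊆ toSetF x ↔ D ⊆ toSetF (Function.update y j (x j)) := by
        refine subset_toSetF_congr fun k hk => ?_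
        by_cases hkj : k = j
        · subst hkj; rw [Function.update_self]
        · rw [Function.update_of_ne hkj, hxy k (by rintro rfl; exact hiD hk) hkj]
      have h2 : D ⊆ toSetF y ↔ D ⊆ toSetF (Function.update x j (y j)) := by
        refine subset_toSetF_congr fun k hk => ?_
        by_cases hkj : k = j
        · subst hkj; rw [Function.update_self]
        · rw [Function.update_of_ne hkj, (hxy k (by rintro rfl; exact hiD hk) hkj).symm]
      simp only [h1, h2]
      exact add_comm _ _
end

section
/- Theorem 2(i) (strong consistency of the plug-in estimator): let V be a finite set, p a positive probability mass function on {0,1}^V, and X^(1), X^(2), … an i.i.d. sequence of random elements of {0,1}^V distributed according to p. For D ⊆ V let θ_D = ∑_{D' ⊆ D} (−1)^{|D ∖ D'|} log p(𝟙_{D'}) and define the estimator θ̂^(n)_D = ∑_{D' ⊆ D} (−1)^{|D ∖ D'|} log p̂^(n)_{D'}, where p̂^(n)_{D'} = (1/n) ∑_{i=1}^n 𝟙(X^(i) = 𝟙_{D'}) (with log 0 interpreted by the total extension of the real logarithm). Then for every D ⊆ V, θ̂^(n)_D → θ_D almost surely as n → ∞. -/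
/-!
Each empirical frequency `p̂ⁿ_{D'}` is the average of the i.i.d. indicators of `{X i = 𝟙_{D'}}`,
so by the strong law of large numbers it converges almost surely to `p (𝟙_{D'}) > 0`; the
logarithm is continuous there, and `θ̂ⁿ_D` is a finite signed sum of such logarithms.

The sample is not assumed measurable. The events `{X n = x}` are only known to have outer
measures summing to `1`, and that already forces each of them to be null measurable.
-/

open MeasureTheory Filter

section

variable {Ω : Type*} [MeasurableSpace Ω] {μ : Measure Ω}

lemma nullMeasurableSet_of_measure_add_measure_compl_le [IsFiniteMeasure μ] {s : Set Ω}
    (h : μ s + μ sᶜ ≤ μ Set.univ) : NullMeasurableSet s μ := by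
  set t := toMeasurable μ s
  set u := toMeasurable μ sᶜ
  have htu : t ∪ u = Set.univ := Set.eq_univ_of_forall fun ω =>
    (em (ω ∈ s)).imp (subset_toMeasurable μ s ·) (subset_toMeasurable μ sᶜ ·)
  -- the measurable hulls cover `Ω` with total mass at most `μ univ`, so they overlap in a null set
  have hinter : μ (t ∩ u) = 0 := by
    have := measure_union_add_inter (μ := μ) t (measurableSet_toMeasurable μ sᶜ)
    rw [htu, measure_toMeasurable, measure_toMeasurable] at this
    exact nonpos_iff_eq_zero.1 <|
      (ENNReal.add_le_add_iff_left (measure_ne_top μ _)).1 (by rwa [add_zero, this])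
  have hts : t =ᵐ[μ] s := ae_eq_set.2
    ⟨measure_mono_null (Set.inter_subset_inter_right t (subset_toMeasurable μ sᶜ)) hinter,
      by rw [Set.sdiff_eq_empty.2 (subset_toMeasurable μ s), measure_empty]⟩
  exact (measurableSet_toMeasurable μ s).nullMeasurableSet.congr hts

lemma nullMeasurableSet_preimage_singleton_of_sum_le {α : Type*} [Fintype α] [IsFiniteMeasure μ]
    (f : Ω → α) (h : ∑ y, μ (f ⁻¹' {y}) ≤ μ Set.univ) (x : α) :
    NullMeasurableSet (f ⁻¹' {x}) μ := by
  classical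
  refine nullMeasurableSet_of_measure_add_measure_compl_le (le_trans ?_ h)
  have hcompl : (f ⁻¹' {x})ᶜ = ⋃ y ∈ Finset.univ.erase x, f ⁻¹' {y} := by
    ext ω; simp
  rw [← Finset.add_sum_erase _ _ (Finset.mem_univ x), hcompl]
  gcongr
  exact measure_biUnion_finset_le _ _

lemma aemeasurable_of_nullMeasurableSet_preimage_singleton {α : Type*} [Countable α]
    [MeasurableSpace α] {f : Ω → α} (h : ∀ x, NullMeasurableSet (f ⁻¹' {x}) μ) :
    AEMeasurable f μ :=
  NullMeasurable.aemeasurable fun s _ => by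
    rw [← Set.biUnion_of_singleton s, Set.preimage_iUnion₂]
    exact .biUnion s.to_countable fun x _ => h x


open ProbabilityTheory in
lemma ae_tendsto_empirical_frequency [IsFiniteMeasure μ] {α : Type*} [Countable α] [DecidableEq α]
    {X : ℕ → Ω → α} (hindep : iIndepFun (m := fun _ => ⊤) X μ)
    (hnull : ∀ n x, NullMeasurableSet (X n ⁻¹' {x}) μ)
    (hident : ∀ n x, μ (X n ⁻¹' {x}) = μ (X 0 ⁻¹' {x})) (x : α) :
    ∀ᵐ ω ∂μ, Tendsto (fun n : ℕ => (n : ℝ)⁻¹ *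
      ∑ i ∈ Finset.range n, if X i ω = x then (1 : ℝ) else 0) atTop
      (nhds (μ.real (X 0 ⁻¹' {x}))) := by
  let _ : MeasurableSpace α := ⊤
  set f : α → ℝ := fun y => if y = x then 1 else 0
  have hX : ∀ n, AEMeasurable (X n) μ := fun n =>
    aemeasurable_of_nullMeasurableSet_preimage_singleton (hnull n)
  have hXident : ∀ n, IdentDistrib (X n) (X 0) μ μ := fun n =>
    ⟨hX n, hX 0, Measure.ext_of_singleton fun y => by
      rw [Measure.map_apply_of_aemeasurable (hX n) trivial,
        Measure.map_apply_of_aemeasurable (hX 0) trivial, hident]⟩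
  have hf0 : f ∘ X 0 = (X 0 ⁻¹' {x}).indicator fun _ => 1 := by
    ext ω; by_cases h : X 0 ω = x <;> simp [f, h]
  have hint : Integrable (f ∘ X 0) μ := by
    rw [hf0]; exact (integrable_const 1).indicator₀ (hnull 0 x)
  have hmean : μ[f ∘ X 0] = μ.real (X 0 ⁻¹' {x}) := by
    rw [hf0, integral_indicator₀ (hnull 0 x), setIntegral_const, smul_eq_mul, mul_one]
  have hlaw := strong_law_ae_real (fun n => f ∘ X n) hint
    (fun i j hij => (hindep.comp (fun _ => f) fun _ => measurable_from_top).indepFun hij)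
    (fun n => (hXident n).comp measurable_from_top)
  rw [hmean] at hlaw
  simpa only [div_eq_inv_mul, Function.comp_apply, f] using hlaw

end

/-- Theorem 2(i) (strong consistency of the plug-in estimator): for an i.i.d. sample
`X⁽¹⁾, X⁽²⁾, …` from a positive pmf `p` on `{0,1}^V`, the plug-in estimator
`θ̂ⁿ_D = ∑_{D' ⊆ D} (-1)^{|D \ D'|} log p̂ⁿ_{D'}` converges almost surely to
`θ_D = ∑_{D' ⊆ D} (-1)^{|D \ D'|} log p (𝟙_{D'})`. -/
theorem plugin_estimator_strongly_consistent
    {V : Type*} [Fintype V] [DecidableEq V]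
    {Ω : Type*} [MeasurableSpace Ω] (ℙ : Measure Ω) [IsProbabilityMeasure ℙ]
    (p : (V → Bool) → ℝ) (hp : ∀ x, 0 < p x) (hsum : ∑ x : V → Bool, p x = 1)
    (X : ℕ → Ω → (V → Bool))
    (hindep : ProbabilityTheory.iIndepFun
      (m := fun _ : ℕ => (⊤ : MeasurableSpace (V → Bool))) X ℙ)
    (hdist : ∀ n : ℕ, ∀ x : V → Bool, ℙ {ω | X n ω = x} = ENNReal.ofReal (p x))
    (D : Finset V)
    (θ : ℝ)
    (hθ : θ = ∑ D' ∈ D.powerset,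
      (-1 : ℝ) ^ ((D \ D').card) * Real.log (p (fun v => decide (v ∈ D'))))
    (θhat : ℕ → Ω → ℝ)
    (hθhat : ∀ n ω, θhat n ω = ∑ D' ∈ D.powerset,
      (-1 : ℝ) ^ ((D \ D').card) *
        Real.log ((n : ℝ)⁻¹ *
          ∑ i ∈ Finset.range n,
            (if X i ω = (fun v => decide (v ∈ D')) then (1 : ℝ) else 0))) :
    ∀ᵐ ω ∂ℙ, Tendsto (fun n : ℕ => θhat n ω) atTop (nhds θ) := by
  have hnull : ∀ n x, NullMeasurableSet (X n ⁻¹' {x}) ℙ := fun n =>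
    nullMeasurableSet_preimage_singleton_of_sum_le (X n) <| by
      rw [measure_univ, ← ENNReal.ofReal_one, ← hsum,
        ENNReal.ofReal_sum_of_nonneg fun y _ => (hp y).le]
      exact (Finset.sum_congr rfl fun y _ => hdist n y).le
  have hreal : ∀ x, ℙ.real (X 0 ⁻¹' {x}) = p x := fun x => by
    rw [measureReal_def, ← ENNReal.toReal_ofReal (hp x).le, ← hdist 0 x]
    rfl
  have hfreq : ∀ᵐ ω ∂ℙ, ∀ D' : Finset V, Tendsto (fun n : ℕ => (n : ℝ)⁻¹ *
      ∑ i ∈ Finset.range n, (if X i ω = (fun v => decide (v ∈ D')) then (1 : ℝ) else 0))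
      atTop (nhds (p (fun v => decide (v ∈ D')))) := ae_all_iff.2 fun D' => by
    simpa only [hreal] using ae_tendsto_empirical_frequency hindep hnull
      (fun n x => (hdist n x).trans (hdist 0 x).symm) (fun v => decide (v ∈ D'))
  filter_upwards [hfreq] with ω hω
  simp only [hθhat, hθ]
  exact tendsto_finsetSum _ fun D' _ => ((hω D').log (hp _).ne').const_mul _
end
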